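/- Let H be a linear forest, let G be a graph, and let u, v be two distinct adjacent vertices of G. Let G/uv be the graph obtained from G by contracting the edge uv, i.e., the graph on the vertex set V(G) \ {v} in which two distinct vertices a, b are adjacent if and only if they are adjacent in G, or a = u and b is adjacent to v in G, or b = u and a is adjacent to v in G. If G is H-free, then G/uv is H-free. -/

import Mathlib

/-- A linear forest: an acyclic graph in which every vertex has degree at most 2
(no vertex has three pairwise distinct neighbours). -/
def SimpleGraph.IsLinearForest {V : Type*} (G : SimpleGraph V) : Prop :=
  G.IsAcyclic ∧ ∀ v a b c : V, G.Adj v a → G.Adj v b → G.Adj v c → (a = b ∨ a = c ∨ b = c)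

/-- The contraction `G/uv` of the edge `uv`: the graph on `V(G) \ {v}` in which two
distinct vertices `a, b` are adjacent iff they are adjacent in `G`, or `a = u` and `b`
is adjacent to `v` in `G`, or `b = u` and `a` is adjacent to `v` in `G`. -/
def SimpleGraph.contractEdge {V : Type*} (G : SimpleGraph V) (u v : V) :
    SimpleGraph {x : V // x ≠ v} where
  Adj a b := (a : V) ≠ (b : V) ∧
    (G.Adj a b ∨ ((a : V) = u ∧ G.Adj (b : V) v) ∨ ((b : V) = u ∧ G.Adj (a : V) v))
  symm := by
    constructor
    rintro a b ⟨hne, h⟩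
    refine ⟨hne.symm, ?_⟩
    rcases h with h | ⟨h1, h2⟩ | ⟨h1, h2⟩
    · exact Or.inl h.symm
    · exact Or.inr (Or.inr ⟨h1, h2⟩)
    · exact Or.inr (Or.inl ⟨h1, h2⟩)
  loopless := by
    constructor
    rintro a ⟨hne, -⟩
    exact hne rfl

/-!
Let `f` embed `H` as an induced subgraph of `G/uv`, and let `w` be the vertex sent to `u` (if there
is none, `f` is already an induced embedding into `G`). If every neighbour of `w` is sent to a
neighbour of `u` in `G`, or every one to a neighbour of `v`, then `f` lifts to `G` by placing `w`
at `u`, respectively at `v`. Otherwise `w` has two neighbours `a`, `b` with `f a` adjacent to `u`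
only and `f b` adjacent to `v` only, and `f` gives an induced copy in `G` of the graph obtained from
`H` by subdividing the edge `wb`, the new vertex going to `v`.

It remains to see that a linear forest `H` is an induced subgraph of each of its subdivisions.
Since `wb` is a bridge, the side of `b` in `H - wb` does not contain `w`, and as `b` has at most
one neighbour there, it is a path or ray starting at `b`. Shifting it one step towards `w`, with `b`
moved to the new vertex, embeds `H` into the subdivision.
-/

namespace SimpleGraph

variable {V W : Type*}

section Distance

variable {K : SimpleGraph W} {b x y : W}

theorem Reachable.exists_adj_dist_add_one (hx : K.Reachable b x) (hxb : x ≠ b) :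
    ∃ y, K.Adj y x ∧ K.dist b y + 1 = K.dist b x := by
  obtain ⟨p, -, hp⟩ := hx.exists_path_of_dist
  cases h : p.reverse with
  | nil => exact absurd rfl hxb
  | cons hadj q =>
    have hlen : p.length = q.length + 1 := by
      simpa using congrArg Walk.length h
    have hle := dist_le q.reverse
    have hdiff := hadj.symm.diff_dist_adj (u := b)
    rw [Walk.length_reverse] at hle
    exact ⟨_, hadj.symm, by omega⟩

open Classical in
noncomputable def distPred (K : SimpleGraph W) (b x : W) : W :=
  if h : ∃ y, K.Adj y x ∧ K.dist b y + 1 = K.dist b x then h.choose else x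

theorem Reachable.distPred_spec (hx : K.Reachable b x) (hxb : x ≠ b) :
    K.Adj (K.distPred b x) x ∧ K.dist b (K.distPred b x) + 1 = K.dist b x := by
  have h := hx.exists_adj_dist_add_one hxb
  rw [distPred, dif_pos h]
  exact h.choose_spec

theorem Reachable.reachable_distPred (hx : K.Reachable b x) (hxb : x ≠ b) :
    K.Reachable b (K.distPred b x) :=
  hx.trans (hx.distPred_spec hxb).1.reachable.symm

theorem Reachable.distPred_eq_iff_adj (hx : K.Reachable b x) (hxb : x ≠ b) :
    K.distPred b x = b ↔ K.Adj b x := by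
  obtain ⟨hadj, hdist⟩ := hx.distPred_spec hxb
  refine ⟨fun h ↦ h ▸ hadj, fun h ↦ ?_⟩
  rw [← dist_eq_one_iff_adj] at h
  exact ((hx.reachable_distPred hxb).dist_eq_zero_iff).1 (by omega) |>.symm

/-- By induction, two vertices at equal distance from `b` have the same predecessor `z`, which
would then have three neighbours (or two, if `z = b`). -/
theorem Reachable.eq_of_dist_eq
    (hdeg : ∀ z x y c, K.Adj z x → K.Adj z y → K.Adj z c → x = y ∨ x = c ∨ y = c)
    (hb : (K.neighborSet b).Subsingleton)
    (hx : K.Reachable b x) (hy : K.Reachable b y) (h : K.dist b x = K.dist b y) : x = y := by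
  induction hn : K.dist b x generalizing x y with
  | zero =>
    rw [← hx.dist_eq_zero_iff.1 hn, ← hy.dist_eq_zero_iff]
    omega
  | succ n ih =>
    have hxb : x ≠ b := by rintro rfl; simp at hn
    have hyb : y ≠ b := by rintro rfl; rw [dist_self] at h; omega
    obtain ⟨z, hzx, hdx⟩ := hx.exists_adj_dist_add_one hxb
    obtain ⟨z', hzy, hdy⟩ := hy.exists_adj_dist_add_one hyb
    have hzR : K.Reachable b z := hx.trans hzx.reachable.symm
    obtain rfl : z = z' := ih hzR (hy.trans hzy.reachable.symm) (by omega) (by omega)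
    by_cases hzb : z = b
    · subst hzb
      exact hb hzx hzy
    obtain ⟨c, hcz, hdz⟩ := hzR.exists_adj_dist_add_one hzb
    rcases hdeg z x y c hzx hzy hcz.symm with h' | rfl | rfl
    · exact h'
    · omega
    · omega

theorem Reachable.adj_iff_dist
    (hdeg : ∀ z x y c, K.Adj z x → K.Adj z y → K.Adj z c → x = y ∨ x = c ∨ y = c)
    (hb : (K.neighborSet b).Subsingleton)
    (hx : K.Reachable b x) (hy : K.Reachable b y) :
    K.Adj x y ↔ K.dist b x = K.dist b y + 1 ∨ K.dist b y = K.dist b x + 1 := by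
  constructor
  · intro h
    have hne : K.dist b x ≠ K.dist b y := fun he ↦ h.ne (hx.eq_of_dist_eq hdeg hb hy he)
    have := h.diff_dist_adj (u := b)
    omega
  · wlog hxy : K.dist b x = K.dist b y + 1 generalizing x y
    · rintro (h | h)
      · exact absurd h hxy
      · exact (this hy hx h (.inl h)).symm
    intro
    have hxb : x ≠ b := by rintro rfl; simp at hxy
    have := hx.distPred_spec hxb
    rw [← (hx.reachable_distPred hxb).eq_of_dist_eq hdeg hb hy (by omega)]
    exact this.1.symm

theorem Reachable.adj_distPred_iff
    (hdeg : ∀ z x y c, K.Adj z x → K.Adj z y → K.Adj z c → x = y ∨ x = c ∨ y = c)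
    (hb : (K.neighborSet b).Subsingleton)
    (hx : K.Reachable b x) (hy : K.Reachable b y) (hxb : x ≠ b) (hyb : y ≠ b) :
    K.Adj (K.distPred b x) (K.distPred b y) ↔ K.Adj x y := by
  rw [(hx.reachable_distPred hxb).adj_iff_dist hdeg hb (hy.reachable_distPred hyb),
    hx.adj_iff_dist hdeg hb hy]
  have := (hx.distPred_spec hxb).2
  have := (hy.distPred_spec hyb).2
  omega

end Distance

section Shift

variable {K : SimpleGraph W} {b x y : W}

open Classical in
noncomputable def shiftTowards (K : SimpleGraph W) (b x : W) : Option W :=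
  if K.Reachable b x then (if x = b then none else some (K.distPred b x)) else some x

@[simp]
theorem shiftTowards_self : K.shiftTowards b b = none := by
  simp [shiftTowards]

theorem Reachable.shiftTowards_eq (hx : K.Reachable b x) (hxb : x ≠ b) :
    K.shiftTowards b x = some (K.distPred b x) := by
  simp [shiftTowards, hx, hxb]

theorem shiftTowards_of_not_reachable (hx : ¬ K.Reachable b x) : K.shiftTowards b x = some x := by
  simp [shiftTowards, hx]

theorem shiftTowards_injective
    (hdeg : ∀ z x y c, K.Adj z x → K.Adj z y → K.Adj z c → x = y ∨ x = c ∨ y = c)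
    (hb : (K.neighborSet b).Subsingleton) : Function.Injective (K.shiftTowards b) := by
  have hC : ∀ {x y}, K.Reachable b x → K.shiftTowards b x = K.shiftTowards b y → x = y := by
    intro x y hx h
    by_cases hy : K.Reachable b y
    · by_cases hxb : x = b <;> by_cases hyb : y = b
      · rw [hxb, hyb]
      · subst x; simp [hy.shiftTowards_eq hyb] at h
      · subst y; simp [hx.shiftTowards_eq hxb] at h
      rw [hx.shiftTowards_eq hxb, hy.shiftTowards_eq hyb, Option.some_inj] at h
      have hdx := (hx.distPred_spec hxb).2
      have hdy := (hy.distPred_spec hyb).2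
      rw [h] at hdx
      exact hx.eq_of_dist_eq hdeg hb hy (by omega)
    · rw [shiftTowards_of_not_reachable hy] at h
      by_cases hxb : x = b
      · subst x; simp at h
      rw [hx.shiftTowards_eq hxb, Option.some_inj] at h
      exact absurd (h ▸ hx.reachable_distPred hxb) hy
  intro x y h
  by_cases hx : K.Reachable b x
  · exact hC hx h
  by_cases hy : K.Reachable b y
  · exact (hC hy h.symm).symm
  simpa [shiftTowards_of_not_reachable hx, shiftTowards_of_not_reachable hy] using h

end Shift

section Subdivide

variable {H : SimpleGraph W} {w b x y : W}

/-- The edge `wb` replaced by a path `w - none - b` through the new vertex `none`. -/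
def subdivide (H : SimpleGraph W) (w b : W) : SimpleGraph (Option W) where
  Adj
    | some x, some y => (H.deleteEdges {s(w, b)}).Adj x y
    | none, some x | some x, none => x = w ∨ x = b
    | none, none => False
  symm := ⟨by rintro (_ | x) (_ | y) h <;> simp_all [adj_comm]⟩
  loopless := ⟨by rintro (_ | x) h <;> simp_all⟩

@[simp]
theorem subdivide_adj_some_some :
    (H.subdivide w b).Adj (some x) (some y) ↔ (H.deleteEdges {s(w, b)}).Adj x y := Iff.rfl

@[simp]
theorem subdivide_adj_none_some : (H.subdivide w b).Adj none (some x) ↔ x = w ∨ x = b := Iff.rfl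

@[simp]
theorem subdivide_adj_some_none : (H.subdivide w b).Adj (some x) none ↔ x = w ∨ x = b := Iff.rfl

theorem IsLinearForest.anti {K : SimpleGraph W} (hH : H.IsLinearForest) (hKH : K ≤ H) :
    K.IsLinearForest :=
  ⟨hH.1.anti hKH, fun z x y c hx hy hc ↦ hH.2 z x y c (hKH hx) (hKH hy) (hKH hc)⟩

theorem IsLinearForest.subsingleton_neighborSet_deleteEdges (hH : H.IsLinearForest)
    (hwb : H.Adj w b) : ((H.deleteEdges {s(w, b)}).neighborSet b).Subsingleton := by
  intro x hx y hy
  rcases hH.2 b x y w hx.1 hy.1 hwb.symm with h | rfl | rfl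
  · exact h
  all_goals simp [Sym2.eq_swap] at hx hy

theorem IsLinearForest.subdivide_adj_shiftTowards_of_reachable (hH : H.IsLinearForest)
    (hwb : H.Adj w b) (hx : (H.deleteEdges {s(w, b)}).Reachable b x) :
    (H.subdivide w b).Adj ((H.deleteEdges {s(w, b)}).shiftTowards b x)
      ((H.deleteEdges {s(w, b)}).shiftTowards b y) ↔ H.Adj x y := by
  set K := H.deleteEdges {s(w, b)}
  have hdeg := (hH.anti (K := K) (deleteEdges_le _)).2
  have hb := hH.subsingleton_neighborSet_deleteEdges hwb
  have hCw : ∀ {z}, K.Reachable b z → z ≠ w := fun hz h ↦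
    isAcyclic_iff_forall_adj_isBridge.1 hH.1 hwb (h ▸ hz).symm
  have hadj : H.Adj x y ↔ K.Adj x y ∨ (x = b ∧ y = w) := by
    have := hCw hx
    simp only [K, deleteEdges_adj, Set.mem_singleton_iff, Sym2.eq_iff]
    refine ⟨by tauto, ?_⟩
    rintro (⟨h, -⟩ | ⟨rfl, rfl⟩)
    exacts [h, hwb.symm]
  by_cases hy : K.Reachable b y
  · rw [hadj, or_iff_left (fun h ↦ hCw hy h.2)]
    by_cases hxb : x = b <;> by_cases hyb : y = b
    · subst x y; simp
    · subst x
      simp [hy.shiftTowards_eq hyb, hCw (hy.reachable_distPred hyb), hy.distPred_eq_iff_adj hyb]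
    · subst y
      simp [hx.shiftTowards_eq hxb, hCw (hx.reachable_distPred hxb), hx.distPred_eq_iff_adj hxb,
        adj_comm]
    rw [hx.shiftTowards_eq hxb, hy.shiftTowards_eq hyb, subdivide_adj_some_some]
    exact hx.adj_distPred_iff hdeg hb hy hxb hyb
  · have hxy : ¬ K.Adj x y := fun h ↦ hy (hx.trans h.reachable)
    rw [shiftTowards_of_not_reachable hy, hadj]
    by_cases hxb : x = b
    · subst x
      have hyb : y ≠ b := fun h ↦ hy (h ▸ hx)
      simp [hxy, hyb]
    simp only [hx.shiftTowards_eq hxb, subdivide_adj_some_some, hxy, hxb, false_and, or_self,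
      iff_false]
    exact fun h ↦ hy ((hx.reachable_distPred hxb).trans h.reachable)

theorem IsLinearForest.nonempty_embedding_subdivide (hH : H.IsLinearForest) (hwb : H.Adj w b) :
    Nonempty (H ↪g H.subdivide w b) := by
  set K := H.deleteEdges {s(w, b)}
  refine ⟨⟨⟨K.shiftTowards b, shiftTowards_injective (hH.anti (deleteEdges_le _)).2
    (hH.subsingleton_neighborSet_deleteEdges hwb)⟩, fun {x y} ↦ ?_⟩⟩
  change (H.subdivide w b).Adj (K.shiftTowards b x) (K.shiftTowards b y) ↔ H.Adj x y
  by_cases hx : K.Reachable b x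
  · exact hH.subdivide_adj_shiftTowards_of_reachable hwb hx
  by_cases hy : K.Reachable b y
  · rw [adj_comm, H.adj_comm]
    exact hH.subdivide_adj_shiftTowards_of_reachable hwb hy
  have hxb : x ≠ b := fun h ↦ hx (h ▸ .rfl)
  have hyb : y ≠ b := fun h ↦ hy (h ▸ .rfl)
  simp [shiftTowards_of_not_reachable hx, shiftTowards_of_not_reachable hy, K, hxb, hyb]

end Subdivide

section ContractEdge

variable {G : SimpleGraph V} {H : SimpleGraph W} {u v : V}

theorem contractEdge_adj_of_ne {a c : {x : V // x ≠ v}} (ha : (a : V) ≠ u) (hc : (c : V) ≠ u) :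
    (G.contractEdge u v).Adj a c ↔ G.Adj a c := by
  refine ⟨?_, fun h ↦ ⟨h.ne, .inl h⟩⟩
  rintro ⟨-, h | ⟨h, -⟩ | ⟨h, -⟩⟩
  exacts [h, absurd h ha, absurd h hc]

theorem contractEdge_adj_of_eq {a c : {x : V // x ≠ v}} (ha : (a : V) = u) (hc : (c : V) ≠ u) :
    (G.contractEdge u v).Adj a c ↔ G.Adj u c ∨ G.Adj v c := by
  subst ha
  refine ⟨?_, fun h ↦ ⟨hc.symm, ?_⟩⟩
  · rintro ⟨-, h | ⟨-, h⟩ | ⟨h, -⟩⟩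
    exacts [.inl h, .inr h.symm, absurd h hc]
  · rcases h with h | h
    exacts [.inl h, .inr (.inl ⟨rfl, h.symm⟩)]

namespace Embedding

variable (f : H ↪g G.contractEdge u v) {w x y : W}

theorem adj_iff_of_contractEdge_of_ne (hx : (f x : V) ≠ u) (hy : (f y : V) ≠ u) :
    G.Adj (f x) (f y) ↔ H.Adj x y := by
  rw [← contractEdge_adj_of_ne hx hy, f.map_adj_iff]

theorem ne_of_contractEdge_of_eq (hx : (f x : V) = u) (hxy : x ≠ y) : (f y : V) ≠ u :=
  fun hy ↦ hxy (f.injective (Subtype.ext (hx.trans hy.symm)))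

theorem adj_iff_of_contractEdge_of_eq (hx : (f x : V) = u) (hxy : x ≠ y) :
    H.Adj x y ↔ G.Adj u (f y) ∨ G.Adj v (f y) := by
  rw [← contractEdge_adj_of_eq hx (f.ne_of_contractEdge_of_eq hx hxy), f.map_adj_iff]

theorem nonempty_of_contractEdge_of_adj_left
    (h : ∀ w y, (f w : V) = u → H.Adj w y → G.Adj u (f y)) : Nonempty (H ↪g G) := by
  refine ⟨⟨⟨fun x ↦ f x, fun x y hxy ↦ f.injective (Subtype.ext hxy)⟩, fun {x y} ↦ ?_⟩⟩
  change G.Adj (f x) (f y) ↔ H.Adj x y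
  rcases eq_or_ne x y with rfl | hxy
  · simp
  have key : ∀ x y, x ≠ y → (f x : V) = u → (G.Adj u (f y) ↔ H.Adj x y) := fun x y hxy hx ↦
    ⟨fun hu ↦ (f.adj_iff_of_contractEdge_of_eq hx hxy).2 (.inl hu),
      h x y hx⟩
  by_cases hx : (f x : V) = u
  · rw [hx]; exact key x y hxy hx
  by_cases hy : (f y : V) = u
  · rw [hy, G.adj_comm, H.adj_comm]; exact key y x hxy.symm hy
  exact f.adj_iff_of_contractEdge_of_ne hx hy

theorem nonempty_of_contractEdge_of_adj_right
    (h : ∀ w y, (f w : V) = u → H.Adj w y → G.Adj v (f y)) : Nonempty (H ↪g G) := by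
  classical
  let g : W → V := fun x ↦ if (f x : V) = u then v else f x
  have hinj : Function.Injective g := by
    intro x y hxy
    by_cases hx : (f x : V) = u <;> by_cases hy : (f y : V) = u <;>
      simp only [g, hx, hy, if_true, if_false] at hxy
    · exact f.injective (Subtype.ext (hx.trans hy.symm))
    · exact absurd hxy.symm (f y).2
    · exact absurd hxy (f x).2
    · exact f.injective (Subtype.ext hxy)
  refine ⟨⟨⟨g, hinj⟩, fun {x y} ↦ ?_⟩⟩
  change G.Adj (g x) (g y) ↔ H.Adj x y
  rcases eq_or_ne x y with rfl | hxy
  · simp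
  have key : ∀ x y, x ≠ y → (f x : V) = u → (G.Adj v (f y) ↔ H.Adj x y) := fun x y hxy hx ↦
    ⟨fun hv ↦ (f.adj_iff_of_contractEdge_of_eq hx hxy).2 (.inr hv),
      h x y hx⟩
  by_cases hx : (f x : V) = u
  · simp only [g, if_pos hx, if_neg (f.ne_of_contractEdge_of_eq hx hxy)]
    exact key x y hxy hx
  by_cases hy : (f y : V) = u
  · simp only [g, if_pos hy, if_neg hx]
    rw [G.adj_comm, H.adj_comm]; exact key y x hxy.symm hy
  simp only [g, if_neg hx, if_neg hy]
  exact f.adj_iff_of_contractEdge_of_ne hx hy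

theorem adj_right_iff_of_contractEdge {b : W} (huv : G.Adj u v) (hw : (f w : V) = u)
    (hwb : H.Adj w b) (hbu : ¬ G.Adj u (f b)) (hv : ∀ y, H.Adj w y → y ≠ b → ¬ G.Adj v (f y)) :
    G.Adj v (f x) ↔ x = w ∨ x = b := by
  refine ⟨fun hx ↦ ?_, ?_⟩
  · by_contra! hne
    exact hv x ((f.adj_iff_of_contractEdge_of_eq hw hne.1.symm).2 (.inr hx)) hne.2 hx
  · rintro (rfl | rfl)
    · rw [hw]; exact huv.symm
    · exact ((f.adj_iff_of_contractEdge_of_eq hw hwb.ne).1 hwb).resolve_left hbu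

theorem nonempty_subdivide_of_contractEdge {b : W} (huv : G.Adj u v) (hw : (f w : V) = u)
    (hwb : H.Adj w b) (hbu : ¬ G.Adj u (f b)) (hv : ∀ y, H.Adj w y → y ≠ b → ¬ G.Adj v (f y)) :
    Nonempty (H.subdivide w b ↪g G) := by
  have hadjv := fun x ↦ f.adj_right_iff_of_contractEdge (x := x) huv hw hwb hbu hv
  have hadju : ∀ y, y ≠ w → (G.Adj u (f y) ↔ H.Adj w y ∧ y ≠ b) := by
    intro y hyw
    have hy := f.adj_iff_of_contractEdge_of_eq hw hyw.symm
    exact ⟨fun h ↦ ⟨hy.2 (.inl h), by rintro rfl; exact hbu h⟩,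
      fun ⟨h, hyb⟩ ↦ (hy.1 h).resolve_right (hv y h hyb)⟩
  let ψ : Option W → V := fun p ↦ p.elim v fun x ↦ f x
  have hinj : Function.Injective ψ := by
    rintro (_ | x) (_ | y) h
    · rfl
    · exact absurd h.symm (f y).2
    · exact absurd h (f x).2
    · exact congrArg some (f.injective (Subtype.ext h))
  refine ⟨⟨⟨ψ, hinj⟩, fun {p q} ↦ ?_⟩⟩
  change G.Adj (ψ p) (ψ q) ↔ _
  rcases p with _ | x <;> rcases q with _ | y <;> simp only [ψ, Option.elim]
  · simp
  · simpa using hadjv y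
  · simpa [G.adj_comm] using hadjv x
  simp only [subdivide_adj_some_some, deleteEdges_adj, Set.mem_singleton_iff, Sym2.eq_iff]
  rcases eq_or_ne x w with rfl | hxw
  · rcases eq_or_ne y x with rfl | hyx
    · simp
    rw [hw, hadju y hyx]
    simp [hyx]
  rcases eq_or_ne y w with rfl | hyw
  · rw [hw, G.adj_comm, hadju x hxw, H.adj_comm]
    simp [hxw]
  rw [f.adj_iff_of_contractEdge_of_ne (f.ne_of_contractEdge_of_eq hw hxw.symm)
    (f.ne_of_contractEdge_of_eq hw hyw.symm)]
  simp [hxw, hyw]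

end Embedding

end ContractEdge

end SimpleGraph

theorem contractEdge_Hfree {V W : Type*} (H : SimpleGraph W) (hH : H.IsLinearForest)
    (G : SimpleGraph V) (u v : V) (huv : G.Adj u v)
    (hHfree : ¬ Nonempty (H ↪g G)) :
    ¬ Nonempty (H ↪g G.contractEdge u v) := by
  rintro ⟨f⟩
  apply hHfree
  by_cases hleft : ∀ w y, (f w : V) = u → H.Adj w y → G.Adj u (f y)
  · exact f.nonempty_of_contractEdge_of_adj_left hleft
  by_cases hright : ∀ w y, (f w : V) = u → H.Adj w y → G.Adj v (f y)
  · exact f.nonempty_of_contractEdge_of_adj_right hright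
  push Not at hleft hright
  obtain ⟨w, b, hw, hwb, hbu⟩ := hleft
  obtain ⟨w', a, hw', hwa, hav⟩ := hright
  obtain rfl : w = w' := f.injective (Subtype.ext (hw.trans hw'.symm))
  have hv : ∀ y, H.Adj w y → y ≠ b → ¬ G.Adj v (f y) := by
    intro y hwy hyb
    rcases hH.2 w y a b hwy hwa hwb with rfl | hyb' | rfl
    · exact hav
    · exact absurd hyb' hyb
    · have := (f.adj_iff_of_contractEdge_of_eq hw hwa.ne).1 hwa
      tauto
  obtain ⟨g⟩ := f.nonempty_subdivide_of_contractEdge huv hw hwb hbu hv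
  obtain ⟨φ⟩ := hH.nonempty_embedding_subdivide hwb
  exact ⟨g.comp φ⟩
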